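/- Let k ≥ 2, d ≥ 1, and let S be a training set with ‖x_i‖_∞ ≤ 1 for all i, and let (F_t, W_t, j_t) be a ShareBoost sequence for the training loss L. Suppose there exists a matrix W★ ∈ ℝ^{k×d} such that L(W★) ≤ ε for some ε > 0, all entries of W★ lie in [−c,c] for some c > 0, and W★ has exactly r nonzero columns. Then after T = ⌈4 r² c² / ε⌉ iterations, the matrix W_T satisfies L(W_T) ≤ 2ε and ‖W_T‖_{∞,0} ≤ T ≤ ⌈4 r² c² / ε⌉. -/

import Mathlib

open scoped BigOperators

noncomputable section

/-- The multiclass logistic loss for label `y`. -/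
def mcLoss (k : ℕ) (y : Fin k) (v : Fin k → ℝ) : ℝ :=
  Real.log (∑ y' : Fin k, Real.exp ((if y' ≠ y then (1 : ℝ) else 0) - v y + v y'))

/-- The average training loss of the matrix `W` (viewed as `Fin k → Fin d → ℝ`). -/
def trainLoss (k d m : ℕ) (x : Fin m → Fin d → ℝ) (y : Fin m → Fin k)
    (W : Fin k → Fin d → ℝ) : ℝ :=
  (1 / (m : ℝ)) * ∑ i : Fin m, mcLoss k (y i) (fun q => ∑ j : Fin d, W q j * x i j)

/-- The `r`-th column of the gradient matrix of `L` at `W`. -/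
def gradCol (k d : ℕ) (L : (Fin k → Fin d → ℝ) → ℝ) (W : Fin k → Fin d → ℝ)
    (r : Fin d) : Fin k → ℝ :=
  fun q => fderiv ℝ L W (fun q' j' => if q' = q ∧ j' = r then (1 : ℝ) else 0)

/-- A ShareBoost sequence for the training loss determined by the sample `(x, y)`. -/
structure ShareBoostSeq (k d m : ℕ) (x : Fin m → Fin d → ℝ) (y : Fin m → Fin k)
    (F : ℕ → Finset (Fin d)) (W : ℕ → Fin k → Fin d → ℝ) (jj : ℕ → Fin d) : Prop where
  F_zero : F 0 = ∅
  W_supp : ∀ t, ∀ i ∉ F t, ∀ q, W t q i = 0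
  W_min : ∀ t, ∀ V : Fin k → Fin d → ℝ, (∀ i ∉ F t, ∀ q, V q i = 0) →
    trainLoss k d m x y (W t) ≤ trainLoss k d m x y V
  j_max : ∀ t, ∀ r : Fin d,
    ∑ q : Fin k, |gradCol k d (trainLoss k d m x y) (W t) r q| ≤
      ∑ q : Fin k, |gradCol k d (trainLoss k d m x y) (W t) (jj t) q|
  F_succ : ∀ t, F (t + 1) = insert (jj t) (F t)

/-!
Along a line `s ↦ W + s • U` the training loss is an average of log-sum-exp functions, whose
second derivative is the variance of the relative scores under the softmax distribution. Hence
the loss is convex, and it is `1`-smooth along directions supported on a single column with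
entries in `[-1, 1]`, because `‖xᵢ‖_∞ ≤ 1`. Let `Gₜ` be the `ℓ₁`-norm of the selected gradient
column. Convexity, first-order optimality of `Wₜ` on its support and Hölder's inequality give
`L(Wₜ) - ε ≤ r c Gₜ`. A step of length `Gₜ` along the sign vector of that column gives
`L(Wₜ₊₁) ≤ L(Wₜ) - Gₜ² / 2`. Together these force `L(Wₜ) - ε ≤ 2 r² c² / t`.
-/

open Finset Real Matrix

section Calculus

variable {f f' f'' : ℝ → ℝ}

theorem le_of_hasDerivAt_le {g g' : ℝ → ℝ} (hf : ∀ s, HasDerivAt f (f' s) s)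
    (hg : ∀ s, HasDerivAt g (g' s) s) (h₀ : f 0 ≤ g 0) (h' : ∀ s, 0 ≤ s → f' s ≤ g' s)
    {a : ℝ} (ha : 0 ≤ a) : f a ≤ g a :=
  image_le_of_deriv_right_le_deriv_boundary (a := 0) (b := a)
    (fun s _ => (hf s).continuousAt.continuousWithinAt) (fun s _ => (hf s).hasDerivWithinAt)
    h₀ (fun s _ => (hg s).continuousAt.continuousWithinAt) (fun s _ => (hg s).hasDerivWithinAt)
    (fun s hs => h' s hs.1) ⟨ha, le_rfl⟩

theorem add_mul_deriv_le_of_deriv2_nonneg (hf : ∀ s, HasDerivAt f (f' s) s)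
    (hf' : ∀ s, HasDerivAt f' (f'' s) s) (hf'' : ∀ s, 0 ≤ f'' s) {a : ℝ} (ha : 0 ≤ a) :
    f 0 + a * f' 0 ≤ f a := by
  have hmono : ∀ s, 0 ≤ s → f' 0 ≤ f' s := fun s hs =>
    le_of_hasDerivAt_le (fun _ => hasDerivAt_const _ (f' 0)) hf' le_rfl
      (fun t _ => hf'' t) hs
  exact le_of_hasDerivAt_le (fun s => ((hasDerivAt_id s).mul_const (f' 0)).const_add (f 0))
    hf (by simp) (fun s hs => by simpa using hmono s hs) ha

theorem le_add_mul_deriv_add_of_deriv2_le {C : ℝ} (hf : ∀ s, HasDerivAt f (f' s) s)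
    (hf' : ∀ s, HasDerivAt f' (f'' s) s) (hf'' : ∀ s, f'' s ≤ C) {a : ℝ} (ha : 0 ≤ a) :
    f a ≤ f 0 + a * f' 0 + C * a ^ 2 / 2 := by
  have hslope : ∀ s, 0 ≤ s → f' s ≤ f' 0 + C * s := fun s hs =>
    le_of_hasDerivAt_le hf' (fun t => ((hasDerivAt_id t).const_mul C).const_add (f' 0))
      (by simp) (fun t _ => by simpa using hf'' t) hs
  refine le_of_hasDerivAt_le (g := fun s => f 0 + s * f' 0 + C * s ^ 2 / 2) hf (fun s => ?_)
    (by simp) hslope ha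
  exact ((((hasDerivAt_id s).mul_const (f' 0)).const_add (f 0)).fun_add
    (((hasDerivAt_pow 2 s).const_mul C).div_const 2)).congr_deriv (by simp; ring)

end Calculus

section Variance

variable {ι : Type*} [Fintype ι] {p b : ι → ℝ}

theorem sum_mul_sq_sub_sq_eq (hp : ∑ i, p i = 1) (c : ℝ) :
    ∑ i, p i * b i ^ 2 - (∑ i, p i * b i) ^ 2
      = ∑ i, p i * (b i - c) ^ 2 - (∑ i, p i * b i - c) ^ 2 := by
  have h : ∑ i, p i * (b i - c) ^ 2
      = ∑ i, p i * b i ^ 2 - 2 * c * ∑ i, p i * b i + c ^ 2 * ∑ i, p i := by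
    simp only [mul_sum, ← sum_sub_distrib, ← sum_add_distrib]
    exact sum_congr rfl fun i _ => by ring
  rw [h, hp]
  ring

theorem sum_mul_sq_sub_sq_le (hp : ∑ i, p i = 1) (c : ℝ) :
    ∑ i, p i * b i ^ 2 - (∑ i, p i * b i) ^ 2 ≤ ∑ i, p i * (b i - c) ^ 2 := by
  rw [sum_mul_sq_sub_sq_eq hp c]
  linarith [sq_nonneg (∑ i, p i * b i - c)]

theorem sum_mul_sq_sub_sq_nonneg (hp₀ : ∀ i, 0 ≤ p i) (hp : ∑ i, p i = 1) :
    0 ≤ ∑ i, p i * b i ^ 2 - (∑ i, p i * b i) ^ 2 := by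
  rw [sum_mul_sq_sub_sq_eq hp (∑ i, p i * b i), sub_self, zero_pow two_ne_zero, sub_zero]
  exact sum_nonneg fun i _ => mul_nonneg (hp₀ i) (sq_nonneg _)

end Variance

section Softmax

variable {ι : Type*} [Fintype ι]

def softmax (a : ι → ℝ) (i : ι) : ℝ := exp (a i) / ∑ j, exp (a j)

theorem sum_softmax_mul (a c : ι → ℝ) :
    ∑ i, softmax a i * c i = (∑ i, exp (a i) * c i) / ∑ i, exp (a i) := by
  rw [sum_div]
  exact sum_congr rfl fun i _ => div_mul_eq_mul_div _ _ _

theorem hasDerivAt_sum_exp_mul_line (a b c : ι → ℝ) (s : ℝ) :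
    HasDerivAt (fun s => ∑ i, exp (a i + s * b i) * c i)
      (∑ i, exp (a i + s * b i) * (b i * c i)) s :=
  HasDerivAt.fun_sum fun i _ =>
    ((((hasDerivAt_id s).mul_const (b i)).const_add (a i)).exp.mul_const (c i)).congr_deriv
      (by simp; ring)

variable [Nonempty ι]

theorem sum_exp_pos (a : ι → ℝ) : 0 < ∑ i, exp (a i) :=
  sum_pos (fun i _ => exp_pos (a i)) univ_nonempty

theorem softmax_nonneg (a : ι → ℝ) (i : ι) : 0 ≤ softmax a i :=
  div_nonneg (exp_pos _).le (sum_exp_pos a).le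

theorem sum_softmax (a : ι → ℝ) : ∑ i, softmax a i = 1 := by
  simp only [softmax, ← sum_div, div_self (sum_exp_pos a).ne']

theorem hasDerivAt_log_sum_exp_line (a b : ι → ℝ) (s : ℝ) :
    HasDerivAt (fun s => log (∑ i, exp (a i + s * b i)))
      (∑ i, softmax (fun i => a i + s * b i) i * b i) s := by
  have hZ := hasDerivAt_sum_exp_mul_line a b 1 s
  simp only [Pi.one_apply, mul_one] at hZ
  rw [sum_softmax_mul]
  exact hZ.log (sum_exp_pos _).ne'

theorem hasDerivAt_sum_softmax_mul_line (a b : ι → ℝ) (s : ℝ) :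
    HasDerivAt (fun s => ∑ i, softmax (fun i => a i + s * b i) i * b i)
      (∑ i, softmax (fun i => a i + s * b i) i * b i ^ 2
        - (∑ i, softmax (fun i => a i + s * b i) i * b i) ^ 2) s := by
  simp only [sum_softmax_mul]
  have hZ := hasDerivAt_sum_exp_mul_line a b 1 s
  simp only [Pi.one_apply, mul_one] at hZ
  refine ((hasDerivAt_sum_exp_mul_line a b b s).div hZ (sum_exp_pos _).ne').congr_deriv ?_
  have := (sum_exp_pos fun i => a i + s * b i).ne'
  field_simp

end Softmax

theorem Differentiable.hasDerivAt_add_smul {E : Type*} [NormedAddCommGroup E]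
    [NormedSpace ℝ E] {f : E → ℝ} (hf : Differentiable ℝ f) (W U : E) (s : ℝ) :
    HasDerivAt (fun s : ℝ => f (W + s • U)) (fderiv ℝ f (W + s • U) U) s := by
  have hline : HasDerivAt (fun s : ℝ => W + s • U) U s := by
    simpa using ((hasDerivAt_id s).smul_const U).const_add W
  exact (hf _).hasFDerivAt.comp_hasDerivAt s hline

section Loss

variable {k d m : ℕ}

def margin (y : Fin k) (v : Fin k → ℝ) (y' : Fin k) : ℝ :=
  (if y' ≠ y then (1 : ℝ) else 0) - v y + v y'

theorem margin_add_smul (y : Fin k) (v u : Fin k → ℝ) (s : ℝ) :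
    margin y (v + s • u) = fun y' => margin y v y' + s * (u y' - u y) := by
  funext y'
  simp only [margin, Pi.add_apply, Pi.smul_apply, smul_eq_mul]
  ring

theorem mulVec_add_smul (W U : Fin k → Fin d → ℝ) (s : ℝ) (v : Fin d → ℝ) :
    (W + s • U) *ᵥ v = W *ᵥ v + s • U *ᵥ v :=
  (add_mulVec W (s • U) v).trans (congrArg _ (smul_mulVec s U v))

variable (x : Fin m → Fin d → ℝ) (y : Fin m → Fin k)

/-- `lossSlope x y W U` and `lossCurv x y W U` are the first and second derivatives of
`s ↦ trainLoss k d m x y (W + s • U)` at `0`: the softmax mean and variance of the scores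
relative to the true label. -/
def lossSlope (W U : Fin k → Fin d → ℝ) : ℝ :=
  (1 / (m : ℝ)) * ∑ i, ∑ y', softmax (margin (y i) (W *ᵥ x i)) y' *
    ((U *ᵥ x i) y' - (U *ᵥ x i) (y i))

def lossCurv (W U : Fin k → Fin d → ℝ) : ℝ :=
  (1 / (m : ℝ)) * ∑ i,
    (∑ y', softmax (margin (y i) (W *ᵥ x i)) y' * ((U *ᵥ x i) y' - (U *ᵥ x i) (y i)) ^ 2
      - (∑ y', softmax (margin (y i) (W *ᵥ x i)) y' * ((U *ᵥ x i) y' - (U *ᵥ x i) (y i))) ^ 2)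

theorem trainLoss_add_smul (W U : Fin k → Fin d → ℝ) (s : ℝ) :
    trainLoss k d m x y (W + s • U) = (1 / (m : ℝ)) * ∑ i, log (∑ y',
      exp (margin (y i) (W *ᵥ x i) y' + s * ((U *ᵥ x i) y' - (U *ᵥ x i) (y i)))) := by
  change (1 / (m : ℝ)) * ∑ i, log (∑ y', exp (margin (y i) ((W + s • U) *ᵥ x i) y')) = _
  simp only [mulVec_add_smul, margin_add_smul]

variable [NeZero k]

theorem differentiable_trainLoss : Differentiable ℝ (trainLoss k d m x y) := by
  intro W
  unfold trainLoss mcLoss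
  fun_prop (disch := exact (sum_exp_pos _).ne')

theorem fderiv_trainLoss_apply (W U : Fin k → Fin d → ℝ) :
    fderiv ℝ (trainLoss k d m x y) W U = lossSlope x y W U := by
  have h : HasDerivAt (fun s : ℝ => trainLoss k d m x y (W + s • U)) (lossSlope x y W U) 0 := by
    simp only [trainLoss_add_smul]
    simpa [lossSlope] using (HasDerivAt.fun_sum (u := univ) fun i _ =>
      hasDerivAt_log_sum_exp_line (margin (y i) (W *ᵥ x i))
        (fun y' => (U *ᵥ x i) y' - (U *ᵥ x i) (y i)) 0).const_mul (1 / (m : ℝ))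
  simpa using ((differentiable_trainLoss x y).hasDerivAt_add_smul W U 0).unique h

theorem hasDerivAt_fderiv_trainLoss_add_smul (W U : Fin k → Fin d → ℝ) (s : ℝ) :
    HasDerivAt (fun s => fderiv ℝ (trainLoss k d m x y) (W + s • U) U)
      (lossCurv x y (W + s • U) U) s := by
  simp only [fderiv_trainLoss_apply x y, lossSlope, lossCurv, mulVec_add_smul,
    margin_add_smul]
  exact (HasDerivAt.fun_sum fun i _ => hasDerivAt_sum_softmax_mul_line _ _ s).const_mul _

theorem lossCurv_nonneg (W U : Fin k → Fin d → ℝ) : 0 ≤ lossCurv x y W U := by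
  exact mul_nonneg (by positivity) (sum_nonneg fun i _ =>
    sum_mul_sq_sub_sq_nonneg (softmax_nonneg _) (sum_softmax _))

theorem lossCurv_le_one (W U : Fin k → Fin d → ℝ)
    (hU : ∀ i q, |(U *ᵥ x i) q| ≤ 1) : lossCurv x y W U ≤ 1 := by
  have hterm : ∀ i,
      ∑ y', softmax (margin (y i) (W *ᵥ x i)) y' * ((U *ᵥ x i) y' - (U *ᵥ x i) (y i)) ^ 2
        - (∑ y', softmax (margin (y i) (W *ᵥ x i)) y' * ((U *ᵥ x i) y' - (U *ᵥ x i) (y i))) ^ 2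
        ≤ 1 := fun i => calc
    _ ≤ ∑ y', softmax (margin (y i) (W *ᵥ x i)) y' * (U *ᵥ x i) y' ^ 2 := by
      simpa using sum_mul_sq_sub_sq_le (sum_softmax (margin (y i) (W *ᵥ x i)))
        (b := fun y' => (U *ᵥ x i) y' - (U *ᵥ x i) (y i)) (-(U *ᵥ x i) (y i))
    _ ≤ ∑ y', softmax (margin (y i) (W *ᵥ x i)) y' := by
      refine sum_le_sum fun y' _ => mul_le_of_le_one_right (softmax_nonneg _ _) ?_
      simpa using sq_le_one_iff_abs_le_one _ |>.mpr (hU i y')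
    _ = 1 := sum_softmax _
  calc lossCurv x y W U ≤ (1 / (m : ℝ)) * ∑ _i : Fin m, 1 :=
        mul_le_mul_of_nonneg_left (sum_le_sum fun i _ => hterm i) (by positivity)
    _ ≤ 1 := by
        rw [sum_const, card_univ, Fintype.card_fin, nsmul_one, one_div_mul_eq_div]
        exact div_self_le_one _

theorem trainLoss_add_fderiv_sub_le (W V : Fin k → Fin d → ℝ) :
    trainLoss k d m x y W + fderiv ℝ (trainLoss k d m x y) W (V - W)
      ≤ trainLoss k d m x y V := by
  simpa using add_mul_deriv_le_of_deriv2_nonneg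
    ((differentiable_trainLoss x y).hasDerivAt_add_smul W (V - W))
    (hasDerivAt_fderiv_trainLoss_add_smul x y W (V - W))
    (fun s => lossCurv_nonneg x y _ _) zero_le_one

theorem trainLoss_add_smul_le (W U : Fin k → Fin d → ℝ)
    (hU : ∀ i q, |(U *ᵥ x i) q| ≤ 1) {η : ℝ} (hη : 0 ≤ η) :
    trainLoss k d m x y (W + η • U)
      ≤ trainLoss k d m x y W + η * fderiv ℝ (trainLoss k d m x y) W U + η ^ 2 / 2 := by
  simpa using le_add_mul_deriv_add_of_deriv2_le
    ((differentiable_trainLoss x y).hasDerivAt_add_smul W U)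
    (hasDerivAt_fderiv_trainLoss_add_smul x y W U)
    (fun s => lossCurv_le_one x y _ U hU) hη

end Loss

section Gradient

variable {k d : ℕ}

def gradColNorm (L : (Fin k → Fin d → ℝ) → ℝ) (W : Fin k → Fin d → ℝ)
    (r : Fin d) : ℝ :=
  ∑ q, |gradCol k d L W r q|

theorem fderiv_apply_eq_sum_gradCol (L : (Fin k → Fin d → ℝ) → ℝ)
    (W V : Fin k → Fin d → ℝ) : fderiv ℝ L W V = ∑ q, ∑ r, V q r * gradCol k d L W r q := by
  have hV : V = ∑ q, ∑ r, V q r • fun q' j' => if q' = q ∧ j' = r then (1 : ℝ) else 0 := by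
    ext q' j'
    simp [Finset.sum_apply, ite_and]
  conv_lhs => rw [hV]
  simp only [map_sum, map_smul, smul_eq_mul, gradCol]

theorem abs_fderiv_apply_le (L : (Fin k → Fin d → ℝ) → ℝ) {W V : Fin k → Fin d → ℝ}
    {N : Finset (Fin d)} {c G : ℝ} (hc : 0 ≤ c) (hV : ∀ q r, |V q r| ≤ c)
    (hN : ∀ r ∉ N, ∀ q, V q r = 0) (hG : ∀ r, gradColNorm L W r ≤ G) :
    |fderiv ℝ L W V| ≤ N.card * c * G := by
  rw [fderiv_apply_eq_sum_gradCol, sum_comm]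
  calc |∑ r, ∑ q, V q r * gradCol k d L W r q|
      ≤ ∑ r, ∑ q, |V q r| * |gradCol k d L W r q| := by
        refine (abs_sum_le_sum_abs _ _).trans (sum_le_sum fun r _ => ?_)
        simpa only [abs_mul] using abs_sum_le_sum_abs (fun q => V q r * gradCol k d L W r q) univ
    _ = ∑ r ∈ N, ∑ q, |V q r| * |gradCol k d L W r q| := by
        refine (sum_subset (subset_univ N) fun r _ hr => ?_).symm
        simp [hN r hr]
    _ ≤ ∑ r ∈ N, c * G := by
        refine sum_le_sum fun r _ => ?_
        calc ∑ q, |V q r| * |gradCol k d L W r q| ≤ ∑ q, c * |gradCol k d L W r q| :=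
              sum_le_sum fun q _ => mul_le_mul_of_nonneg_right (hV q r) (abs_nonneg _)
          _ ≤ c * G := by rw [← mul_sum]; exact mul_le_mul_of_nonneg_left (hG r) hc
    _ = N.card * c * G := by rw [sum_const, nsmul_eq_mul, mul_assoc]

end Gradient

theorem mul_succ_le_of_le_sub_sq_div {M A A' t : ℝ} (hM : 0 < M) (ht : 0 ≤ t)
    (hAt : A * t ≤ M) (hA' : A' ≤ A - A ^ 2 / M) : A' * (t + 1) ≤ M := by
  rcases le_or_gt A' 0 with hneg | hpos
  · nlinarith
  have hA : A < M := by
    by_contra! h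
    have : A - A ^ 2 / M ≤ 0 := by
      rw [sub_nonpos, le_div_iff₀ hM]; nlinarith
    linarith
  have key : (A - A ^ 2 / M) * (t + 1) ≤ M := by
    rw [← mul_le_mul_iff_of_pos_left hM]
    have : M * ((A - A ^ 2 / M) * (t + 1)) = (M * A - A ^ 2) * (t + 1) := by
      field_simp
    rw [this]
    nlinarith [mul_nonneg (sub_nonneg.2 hAt) (sub_nonneg.2 hA.le)]
  nlinarith

theorem mul_le_of_le_sub_sq_div_two {a g : ℕ → ℝ} {R : ℝ}
    (hgap : ∀ t, a t ≤ R * g t) (hdesc : ∀ t, a (t + 1) ≤ a t - g t ^ 2 / 2) (t : ℕ) :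
    a t * t ≤ 2 * R ^ 2 := by
  induction t with
  | zero => simp [sq_nonneg]
  | succ t ih =>
    rcases le_or_gt (a t) 0 with hneg | hpos
    · nlinarith [hdesc t, sq_nonneg (g t), sq_nonneg R]
    have hRg : 0 < R * g t := hpos.trans_le (hgap t)
    have hR : R ≠ 0 := by rintro rfl; simp at hRg
    have hM : 0 < 2 * R ^ 2 := by positivity
    have hsq : a t ^ 2 / (2 * R ^ 2) ≤ g t ^ 2 / 2 := by
      rw [div_le_iff₀ hM]
      nlinarith [hgap t]
    push_cast
    exact mul_succ_le_of_le_sub_sq_div hM t.cast_nonneg ih ((hdesc t).trans (by linarith))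

theorem le_div_two_of_le_sub_sq_div_two {a g : ℕ → ℝ} {R ε : ℝ}
    (hgap : ∀ t, a t ≤ R * g t) (hdesc : ∀ t, a (t + 1) ≤ a t - g t ^ 2 / 2) (hε : 0 < ε)
    {T : ℕ} (hT : 4 * R ^ 2 / ε ≤ T) : a T ≤ ε / 2 := by
  rcases T.eq_zero_or_pos with rfl | hTpos
  · have hR : R = 0 := by
      rw [Nat.cast_zero, div_le_iff₀ hε, zero_mul] at hT
      nlinarith
    calc a 0 ≤ R * g 0 := hgap 0
      _ = 0 := by rw [hR, zero_mul]
      _ ≤ ε / 2 := by positivity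
  · have hT' : (0 : ℝ) < T := by exact_mod_cast hTpos
    have h := mul_le_of_le_sub_sq_div_two hgap hdesc T
    rw [div_le_iff₀ hε] at hT
    rw [← mul_le_mul_iff_of_pos_right hT']
    nlinarith

namespace ShareBoostSeq

variable {k d m : ℕ} {x : Fin m → Fin d → ℝ} {y : Fin m → Fin k} {F : ℕ → Finset (Fin d)}
  {W : ℕ → Fin k → Fin d → ℝ} {jj : ℕ → Fin d}

theorem card_F_le (hSB : ShareBoostSeq k d m x y F W jj) (t : ℕ) : (F t).card ≤ t := by
  induction t with
  | zero => simp [hSB.F_zero]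
  | succ t ih => exact hSB.F_succ t ▸ (card_insert_le _ _).trans (by omega)

theorem ncard_nonzero_columns_le (hSB : ShareBoostSeq k d m x y F W jj) (t : ℕ) :
    {i | ∃ q, W t q i ≠ 0}.ncard ≤ t := by
  refine le_trans ?_ (hSB.card_F_le t)
  rw [← Set.ncard_coe_finset]
  refine Set.ncard_le_ncard (fun i ⟨q, hq⟩ => ?_) (F t).finite_toSet
  by_contra hi
  exact hq (hSB.W_supp t i hi q)

theorem fderiv_trainLoss_eq_zero [NeZero k] (hSB : ShareBoostSeq k d m x y F W jj) {t : ℕ}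
    {V : Fin k → Fin d → ℝ} (hV : ∀ i ∉ F t, ∀ q, V q i = 0) :
    fderiv ℝ (trainLoss k d m x y) (W t) V = 0 := by
  have hmin : IsMinOn (trainLoss k d m x y) {V | ∀ i ∉ F t, ∀ q, V q i = 0} (W t) :=
    fun V hV => hSB.W_min t V hV
  rw [← (differentiable_trainLoss x y _).lineDeriv_eq_fderiv]
  refine hmin.lineDeriv_eq_zero (Filter.Eventually.of_forall fun s i hi q => ?_)
  simp [hSB.W_supp t i hi q, hV i hi q]

theorem trainLoss_sub_le [NeZero k] (hSB : ShareBoostSeq k d m x y F W jj)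
    {Wstar : Fin k → Fin d → ℝ} {N : Finset (Fin d)} {c : ℝ} (hc : 0 ≤ c)
    (hWstar : ∀ q r, |Wstar q r| ≤ c) (hN : ∀ r ∉ N, ∀ q, Wstar q r = 0) (t : ℕ) :
    trainLoss k d m x y (W t) - trainLoss k d m x y Wstar ≤
      N.card * c * gradColNorm (trainLoss k d m x y) (W t) (jj t) := by
  have hconv := trainLoss_add_fderiv_sub_le x y (W t) Wstar
  rw [map_sub, hSB.fderiv_trainLoss_eq_zero (hSB.W_supp t), sub_zero] at hconv
  have hholder := abs_fderiv_apply_le (trainLoss k d m x y)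
    (G := gradColNorm _ (W t) (jj t)) hc hWstar hN (hSB.j_max t)
  linarith [neg_abs_le (fderiv ℝ (trainLoss k d m x y) (W t) Wstar)]

theorem trainLoss_succ_le [NeZero k] (hSB : ShareBoostSeq k d m x y F W jj)
    (hx : ∀ i j, |x i j| ≤ 1) (t : ℕ) :
    trainLoss k d m x y (W (t + 1)) ≤
      trainLoss k d m x y (W t) - gradColNorm (trainLoss k d m x y) (W t) (jj t) ^ 2 / 2 := by
  set G := gradColNorm (trainLoss k d m x y) (W t) (jj t)
  set g := gradCol k d (trainLoss k d m x y) (W t) (jj t)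
  set U : Fin k → Fin d → ℝ := fun q i => if i = jj t then -(SignType.sign (g q) : ℝ) else 0
  have hU : ∀ i q, |(U *ᵥ x i) q| ≤ 1 := by
    intro i q
    have hsign : |(SignType.sign (g q) : ℝ)| ≤ 1 := by
      rcases lt_trichotomy (g q) 0 with h | h | h <;> simp [h]
    simpa [U, mulVec, dotProduct] using mul_le_one₀ hsign (abs_nonneg _) (hx i (jj t))
  have hslope : fderiv ℝ (trainLoss k d m x y) (W t) U = -G := by
    rw [fderiv_apply_eq_sum_gradCol]
    simp [U, G, gradColNorm, g, sign_mul_self]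
  have hfeas : ∀ i ∉ F (t + 1), ∀ q, (W t + G • U) q i = 0 := by
    intro i hi q
    rw [hSB.F_succ, mem_insert, not_or] at hi
    simp [U, hi.1, hSB.W_supp t i hi.2 q]
  calc trainLoss k d m x y (W (t + 1)) ≤ trainLoss k d m x y (W t + G • U) :=
        hSB.W_min _ _ hfeas
    _ ≤ trainLoss k d m x y (W t) + G * fderiv ℝ (trainLoss k d m x y) (W t) U + G ^ 2 / 2 :=
        trainLoss_add_smul_le x y (W t) U hU (sum_nonneg fun q _ => abs_nonneg _)
    _ = trainLoss k d m x y (W t) - G ^ 2 / 2 := by rw [hslope]; ring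

end ShareBoostSeq

theorem shareBoost_shared_features_corollary_general
    (k d m : ℕ) (hk : 2 ≤ k)
    (x : Fin m → Fin d → ℝ) (y : Fin m → Fin k)
    (hx : ∀ i : Fin m, ‖x i‖ ≤ 1)
    (F : ℕ → Finset (Fin d)) (W : ℕ → Fin k → Fin d → ℝ) (jj : ℕ → Fin d)
    (hSB : ShareBoostSeq k d m x y F W jj)
    (ε c : ℝ) (hε : 0 < ε) (hc : 0 < c)
    (Wstar : Fin k → Fin d → ℝ)
    (hWstarLoss : trainLoss k d m x y Wstar ≤ ε)
    (hWstarEntries : ∀ q i, Wstar q i ∈ Set.Icc (-c) c)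
    (r : ℕ) (hWstarCols : {i : Fin d | ∃ q, Wstar q i ≠ 0}.ncard = r)
    (T : ℕ) (hT : T = ⌈4 * (r : ℝ) ^ 2 * c ^ 2 / ε⌉₊) :
    trainLoss k d m x y (W T) ≤ 2 * ε ∧
      {i : Fin d | ∃ q, W T q i ≠ 0}.ncard ≤ T ∧ T ≤ ⌈4 * (r : ℝ) ^ 2 * c ^ 2 / ε⌉₊ := by
  have : NeZero k := ⟨by omega⟩
  have hx' : ∀ i j, |x i j| ≤ 1 := fun i j => (norm_le_pi_norm (x i) j).trans (hx i)
  set N := univ.filter fun i => ∃ q, Wstar q i ≠ 0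
  have hN : ∀ i ∉ N, ∀ q, Wstar q i = 0 := by simp [N]
  have hNcard : N.card = r := by
    rw [← hWstarCols, ← Set.ncard_coe_finset, coe_filter]
    simp only [mem_univ, true_and]
  have hgap : ∀ t, trainLoss k d m x y (W t) - ε ≤
      (r * c) * gradColNorm (trainLoss k d m x y) (W t) (jj t) := fun t => by
    have := hSB.trainLoss_sub_le hc.le (fun q i => abs_le.2 (hWstarEntries q i)) hN t
    rw [hNcard] at this
    linarith
  have hTge : 4 * ((r : ℝ) * c) ^ 2 / ε ≤ T := by
    rw [hT, mul_pow, ← mul_assoc]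
    exact Nat.le_ceil _
  have hrate := le_div_two_of_le_sub_sq_div_two (a := fun t => trainLoss k d m x y (W t) - ε)
    hgap (fun t => by linarith [hSB.trainLoss_succ_le hx' t]) hε hTge
  exact ⟨by linarith, hSB.ncard_nonzero_columns_le T, hT.le⟩

/-- **Corollary 1.** If there is a matrix `W★` with loss at most `ε`, entries in `[-c, c]`,
and exactly `r` nonzero columns, then after `T = ⌈4 r² c² / ε⌉` iterations ShareBoost
outputs a matrix with loss at most `2ε` and at most `T ≤ ⌈4 r² c² / ε⌉` nonzero columns. -/
theorem shareBoost_shared_features_corollary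
    (k d m : ℕ) (hk : 2 ≤ k) (hd : 1 ≤ d) (hm : 1 ≤ m)
    (x : Fin m → Fin d → ℝ) (y : Fin m → Fin k)
    (hx : ∀ i : Fin m, ‖x i‖ ≤ 1)
    (F : ℕ → Finset (Fin d)) (W : ℕ → Fin k → Fin d → ℝ) (jj : ℕ → Fin d)
    (hSB : ShareBoostSeq k d m x y F W jj)
    (ε c : ℝ) (hε : 0 < ε) (hc : 0 < c)
    (Wstar : Fin k → Fin d → ℝ)
    (hWstarLoss : trainLoss k d m x y Wstar ≤ ε)
    (hWstarEntries : ∀ q i, Wstar q i ∈ Set.Icc (-c) c)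
    (r : ℕ) (hWstarCols : {i : Fin d | ∃ q, Wstar q i ≠ 0}.ncard = r)
    (T : ℕ) (hT : T = ⌈4 * (r : ℝ) ^ 2 * c ^ 2 / ε⌉₊) :
    trainLoss k d m x y (W T) ≤ 2 * ε ∧
      {i : Fin d | ∃ q, W T q i ≠ 0}.ncard ≤ T ∧ T ≤ ⌈4 * (r : ℝ) ^ 2 * c ^ 2 / ε⌉₊ :=
  shareBoost_shared_features_corollary_general k d m hk x y hx F W jj hSB ε c hε hc Wstar hWstarLoss
    hWstarEntries r hWstarCols T hT
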